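/- If there exists a sequence of A-unit vectors {x_n} with lim ‖Tx_n‖_A = ‖T‖_A and lim ⟨Tx_n, Sx_n⟩_A = 0, then for all γ ∈ ℂ, ‖T + γS‖_A² ≥ ‖T‖_A² + |γ|² m_A(S)², where m_A(S) = inf{‖Sx‖_A : ‖x‖_A = 1}. -/

import Mathlib

noncomputable section

open Filter Topology

variable {H : Type*} [NormedAddCommGroup H] [InnerProductSpace ℂ H]

/-- The semi-inner product induced by `A`: `⟨x, y⟩_A = ⟨A x, y⟩`. -/
def innerA (A : H →L[ℂ] H) (x y : H) : ℂ := @inner ℂ _ _ (A x) y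

/-- The seminorm induced by `A`: `‖x‖_A = √⟨A x, x⟩`. -/
def normA (A : H →L[ℂ] H) (x : H) : ℝ := Real.sqrt (innerA A x x).re

/-- The operator seminorm induced by `A`. -/
def opNormA (A T : H →L[ℂ] H) : ℝ :=
  sSup {r : ℝ | ∃ x : H, normA A x = 1 ∧ r = normA A (T x)}

/-- `T` is `A`-bounded. -/
def ABounded (A T : H →L[ℂ] H) : Prop :=
  ∃ c > 0, ∀ x : H, normA A (T x) ≤ c * normA A x

/-- The `A`-minimum modulus. -/
def mA (A S : H →L[ℂ] H) : ℝ :=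
  sInf {r : ℝ | ∃ x : H, normA A x = 1 ∧ r = normA A (S x)}

/-!
Along the given sequence, `‖(T + γS) xₙ‖_A² = ‖T xₙ‖_A² + 2 Re (γ ⟨T xₙ, S xₙ⟩_A) + |γ|² ‖S xₙ‖_A²`.
The last term is at least `|γ|² m_A(S)²`, the cross term tends to `0` and `‖T xₙ‖_A → ‖T‖_A`,
while the left side is at most `‖T + γS‖_A²`: `T + γS` is `A`-bounded by the triangle inequality
for the seminorm `‖·‖_A`, so `‖T + γS‖_A` is a genuine supremum rather than the junk `sSup` of an
unbounded set.
-/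

section SemiInner

variable {A : H →L[ℂ] H}

lemma innerA_conj_symm (hA : (A : H →ₗ[ℂ] H).IsSymmetric) (x y : H) :
    starRingEnd ℂ (innerA A y x) = innerA A x y := by
  rw [innerA, innerA, inner_conj_symm]
  exact (hA x y).symm

lemma normA_nonneg (x : H) : 0 ≤ normA A x := Real.sqrt_nonneg _

lemma normA_sq (hA : A.IsPositive) (x : H) : normA A x ^ 2 = (innerA A x x).re :=
  Real.sq_sqrt (hA.re_inner_nonneg_left x)

abbrev innerACore (hA : A.IsPositive) : PreInnerProductSpace.Core ℂ H where
  inner := innerA A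
  conj_inner_symm := innerA_conj_symm hA.isSymmetric
  re_inner_nonneg := hA.re_inner_nonneg_left
  add_left x y z := by simp only [innerA, map_add, inner_add_left]
  smul_left x y r := by simp only [innerA, map_smul, inner_smul_left]

lemma norm_innerA_le (hA : A.IsPositive) (x y : H) :
    ‖innerA A x y‖ ≤ normA A x * normA A y :=
  @InnerProductSpace.Core.norm_inner_le_norm ℂ H _ _ _ (innerACore hA) x y

lemma normA_add_smul_sq (hA : A.IsPositive) (γ : ℂ) (x y : H) :
    normA A (x + γ • y) ^ 2
      = normA A x ^ 2 + 2 * (γ * innerA A x y).re + ‖γ‖ ^ 2 * normA A y ^ 2 := by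
  have hyx : innerA A y x = starRingEnd ℂ (innerA A x y) :=
    (innerA_conj_symm hA.isSymmetric y x).symm
  rw [normA_sq hA, normA_sq hA, normA_sq hA]
  simp only [innerA] at hyx ⊢
  rw [map_add, map_smul, inner_add_left, inner_add_right, inner_add_right,
    inner_smul_left, inner_smul_right, inner_smul_left, inner_smul_right, hyx]
  simp only [Complex.add_re, Complex.mul_re, Complex.conj_re, Complex.conj_im,
    Complex.mul_im, Complex.sq_norm, Complex.normSq_apply]
  ring

lemma normA_add_smul_le (hA : A.IsPositive) (γ : ℂ) (x y : H) :
    normA A (x + γ • y) ≤ normA A x + ‖γ‖ * normA A y := by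
  have hcross : (γ * innerA A x y).re ≤ ‖γ‖ * (normA A x * normA A y) :=
    calc (γ * innerA A x y).re ≤ ‖γ * innerA A x y‖ := Complex.re_le_norm _
      _ = ‖γ‖ * ‖innerA A x y‖ := norm_mul _ _
      _ ≤ ‖γ‖ * (normA A x * normA A y) := by gcongr; exact norm_innerA_le hA x y
  refine le_of_sq_le_sq ?_
    (add_nonneg (normA_nonneg x) (mul_nonneg (norm_nonneg γ) (normA_nonneg y)))
  rw [normA_add_smul_sq hA]
  nlinarith

end SemiInner

section OperatorBounds

variable {A T S : H →L[ℂ] H}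

lemma ABounded.add_smul (hA : A.IsPositive) (hT : ABounded A T) (hS : ABounded A S)
    (γ : ℂ) : ABounded A (T + γ • S) := by
  obtain ⟨cT, hcT0, hcT⟩ := hT
  obtain ⟨cS, hcS0, hcS⟩ := hS
  refine ⟨cT + ‖γ‖ * cS, by positivity, fun x => ?_⟩
  calc normA A (T x + γ • S x) ≤ normA A (T x) + ‖γ‖ * normA A (S x) :=
        normA_add_smul_le hA γ _ _
    _ ≤ cT * normA A x + ‖γ‖ * (cS * normA A x) := by gcongr; exacts [hcT x, hcS x]
    _ = (cT + ‖γ‖ * cS) * normA A x := by ring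

lemma ABounded.normA_apply_le_opNormA (hT : ABounded A T) {x : H} (hx : normA A x = 1) :
    normA A (T x) ≤ opNormA A T := by
  obtain ⟨c, -, hc⟩ := hT
  refine le_csSup ⟨c, ?_⟩ ⟨x, hx, rfl⟩
  rintro r ⟨y, hy, rfl⟩
  simpa [hy] using hc y

lemma mA_nonneg : 0 ≤ mA A S :=
  Real.sInf_nonneg fun _ ⟨_, _, hr⟩ => hr ▸ normA_nonneg _

lemma mA_le_normA_apply {x : H} (hx : normA A x = 1) : mA A S ≤ normA A (S x) :=
  csInf_le ⟨0, fun _ ⟨_, _, hr⟩ => hr ▸ normA_nonneg _⟩ ⟨x, hx, rfl⟩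

end OperatorBounds

theorem stmt7_general (A T S : H →L[ℂ] H) (hA : A.IsPositive)
    (hT : ABounded A T) (hS : ABounded A S)
    (hseq : ∃ x : ℕ → H, (∀ n, normA A (x n) = 1) ∧
      Tendsto (fun n => normA A (T (x n))) atTop (𝓝 (opNormA A T)) ∧
      Tendsto (fun n => innerA A (T (x n)) (S (x n))) atTop (𝓝 0)) :
    ∀ γ : ℂ, opNormA A T ^ 2 + ‖γ‖ ^ 2 * mA A S ^ 2 ≤
      opNormA A (T + γ • S) ^ 2 := by
  intro γ
  obtain ⟨x, hx, hxT, hxTS⟩ := hseq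
  have hbound : ∀ n, normA A (T (x n)) ^ 2 + 2 * (γ * innerA A (T (x n)) (S (x n))).re
      + ‖γ‖ ^ 2 * mA A S ^ 2 ≤ opNormA A (T + γ • S) ^ 2 := fun n =>
    calc _ ≤ normA A (T (x n) + γ • S (x n)) ^ 2 := by
          rw [normA_add_smul_sq hA]
          gcongr
          exacts [mA_nonneg, mA_le_normA_apply (hx n)]
      _ ≤ _ := by
          gcongr
          · exact normA_nonneg _
          · exact (hT.add_smul hA hS γ).normA_apply_le_opNormA (hx n)
  have hcross : Tendsto (fun n => (γ * innerA A (T (x n)) (S (x n))).re) atTop (𝓝 0) := by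
    simpa only [mul_zero, Complex.zero_re, Function.comp_def] using
      (Complex.continuous_re.tendsto _).comp (hxTS.const_mul γ)
  have hlim := ((hxT.pow 2).add (hcross.const_mul 2)).add_const (‖γ‖ ^ 2 * mA A S ^ 2)
  simpa using le_of_tendsto' hlim hbound

theorem stmt7 [CompleteSpace H] (A T S : H →L[ℂ] H) (hA : A.IsPositive)
    (hT : ABounded A T) (hS : ABounded A S)
    (hseq : ∃ x : ℕ → H, (∀ n, normA A (x n) = 1) ∧
      Tendsto (fun n => normA A (T (x n))) atTop (𝓝 (opNormA A T)) ∧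
      Tendsto (fun n => innerA A (T (x n)) (S (x n))) atTop (𝓝 0)) :
    ∀ γ : ℂ, opNormA A T ^ 2 + ‖γ‖ ^ 2 * mA A S ^ 2 ≤
      opNormA A (T + γ • S) ^ 2 :=
  stmt7_general A T S hA hT hS hseq
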